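/- arXiv:1305.6226 — 3 statements merged into one kernel-verified Lean document; each statement's English description precedes it below -/
import Mathlib

section
/- If a family of vectors Φ = {φ_n}_{n=1}^N in ℝ^M is full spark (every subset of size M is linearly independent) and N ≥ 2M − 1, then Φ has the complement property, and hence allows phase retrieval. -/
/-!
A set of at least `M` full spark vectors spans `ℝ^M`, and when `N ≥ 2M - 1` one of `I`, `Iᶜ` has
at least `M` elements: this is the complement property. If `|⟪x, φ n⟫| = |⟪y, φ n⟫|` for all `n`,
let `I` be the set of `n` with `⟪x + y, φ n⟫ = 0`; then `⟪x - y, φ n⟫ = 0` on `Iᶜ`. Whichever of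
`I`, `Iᶜ` spans forces `x + y = 0` or `x - y = 0`.
-/

open RealInnerProductSpace Submodule Module

section FullSpark

variable {K V ι : Type*} [Field K] [AddCommGroup V] [Module K V] [FiniteDimensional K V]

def IsFullSpark (φ : ι → V) : Prop :=
  ∀ S : Finset ι, S.card = finrank K V → LinearIndependent K (fun n : S => φ n)

theorem IsFullSpark.span_eq_top {φ : ι → V} (hφ : IsFullSpark (K := K) φ) {I : Finset ι}
    (hI : finrank K V ≤ I.card) : span K (φ '' I) = ⊤ := by
  obtain ⟨S, hSI, hS⟩ := Finset.exists_subset_card_eq hI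
  have hSspan : span K (φ '' S) = ⊤ := by
    have hrange : Set.range (fun n : S => φ n) = φ '' S := by
      ext; simp
    rw [← hrange]
    refine eq_top_of_finrank_eq ?_
    rw [finrank_span_eq_card (hφ S hS), Fintype.card_coe, hS]
  exact top_le_iff.mp (hSspan ▸ span_mono (Set.image_mono (Finset.coe_subset.mpr hSI)))

end FullSpark

section ComplementProperty

variable {𝕜 E ι : Type*} [RCLike 𝕜] [NormedAddCommGroup E] [InnerProductSpace 𝕜 E]

theorem eq_zero_of_inner_eq_zero_of_span_eq_top {S : Set E} (hS : span 𝕜 S = ⊤) {v : E}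
    (hv : ∀ s ∈ S, inner 𝕜 v s = 0) : v = 0 := by
  have hker : span 𝕜 S ≤ LinearMap.ker (innerₛₗ 𝕜 v) := span_le.mpr hv
  exact inner_self_eq_zero.mp (hker (hS ▸ mem_top))

variable (𝕜) in
def ComplementProperty (φ : ι → E) : Prop :=
  ∀ I : Set ι, span 𝕜 (φ '' I) = ⊤ ∨ span 𝕜 (φ '' Iᶜ) = ⊤

theorem IsFullSpark.complementProperty [Fintype ι] [FiniteDimensional 𝕜 E] {φ : ι → E}
    (hφ : IsFullSpark (K := 𝕜) φ) (hN : 2 * finrank 𝕜 E - 1 ≤ Fintype.card ι) :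
    ComplementProperty 𝕜 φ := by
  classical
  intro I
  by_cases hI : finrank 𝕜 E ≤ I.toFinset.card
  · left
    simpa using hφ.span_eq_top hI
  · right
    have hIc : finrank 𝕜 E ≤ I.toFinsetᶜ.card := by
      rw [Finset.card_compl]
      omega
    simpa using hφ.span_eq_top hIc

end ComplementProperty

theorem ComplementProperty.eq_or_eq_neg_of_abs_inner_eq {E ι : Type*} [NormedAddCommGroup E]
    [InnerProductSpace ℝ E] {φ : ι → E} (hφ : ComplementProperty ℝ φ) {x y : E}
    (h : ∀ n, |⟪x, φ n⟫| = |⟪y, φ n⟫|) : x = y ∨ x = -y := by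
  set I : Set ι := {n | ⟪x + y, φ n⟫ = 0}
  have hIc : ∀ n ∈ Iᶜ, ⟪x - y, φ n⟫ = 0 := by
    intro n hn
    rcases abs_eq_abs.mp (h n) with he | he
    · rw [inner_sub_left, he, sub_self]
    · exact absurd (show ⟪x + y, φ n⟫ = 0 by rw [inner_add_left, he, neg_add_cancel]) hn
  rcases hφ I with hspan | hspan
  · right
    refine eq_neg_of_add_eq_zero_left (eq_zero_of_inner_eq_zero_of_span_eq_top hspan ?_)
    rintro _ ⟨n, hn, rfl⟩
    exact hn
  · left
    refine sub_eq_zero.mp (eq_zero_of_inner_eq_zero_of_span_eq_top hspan ?_)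
    rintro _ ⟨n, hn, rfl⟩
    exact hIc n hn

/-- A full spark family of N ≥ 2M-1 vectors in ℝ^M has the complement property and
allows phase retrieval. -/
theorem stmt_1 (M N : ℕ) (hN : N ≥ 2 * M - 1) (φ : Fin N → EuclideanSpace ℝ (Fin M))
    (hfs : ∀ S : Finset (Fin N), S.card = M →
        LinearIndependent ℝ (fun n : S => φ n)) :
    (∀ I : Finset (Fin N),
        Submodule.span ℝ (φ '' (I : Set (Fin N))) = ⊤ ∨
        Submodule.span ℝ (φ '' ((I : Set (Fin N))ᶜ)) = ⊤) ∧
    (∀ x y : EuclideanSpace ℝ (Fin M),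
        (∀ n, |⟪x, φ n⟫| = |⟪y, φ n⟫|) → x = y ∨ x = -y) := by
  have hspark : IsFullSpark (K := ℝ) φ := by
    simpa only [IsFullSpark, finrank_euclideanSpace_fin] using hfs
  have hcp : ComplementProperty ℝ φ :=
    hspark.complementProperty (by simpa only [finrank_euclideanSpace_fin, Fintype.card_fin])
  exact ⟨fun I => hcp I, fun x y => hcp.eq_or_eq_neg_of_abs_inner_eq⟩
end

section
/- Let W₁,...,W_N be subspaces of ℝ^M with orthogonal projections P₁,...,P_N. The following are equivalent: (a) for all x, y ∈ ℝ^M, ‖P_n x‖ = ‖P_n y‖ for all n implies x = ±y; (b) for every choice of orthonormal bases {φ_{n,d}}_{d=1}^{D_n} of each W_n, the combined family {φ_{n,d}} allows phase retrieval (equivalently, has the complement property) in ℝ^M. -/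
/-!
For an orthonormal basis `(φ_d)` of `W`, Parseval gives `‖P x‖² = ∑_d ⟪x, φ_d⟫²`, so equal
moduli `|⟪x, φ_d⟫|` force equal projection norms. Conversely, if `‖P x‖ = ‖P y‖`, then
`P x + P y ⟂ P x - P y`; completing the unit vector along `P x - P y` to an orthonormal basis of
`W` gives a basis each of whose vectors is orthogonal to `P x - P y` or to `P x + P y`, and on
such vectors `x` and `y` have inner products of equal modulus.
-/

open RealInnerProductSpace

section
variable {𝕜 E : Type*} [RCLike 𝕜] [NormedAddCommGroup E] [InnerProductSpace 𝕜 E]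
  {ι : Type*} [Fintype ι] {K : Submodule 𝕜 E}

theorem OrthonormalBasis.span_range_coe (b : OrthonormalBasis ι 𝕜 K) :
    Submodule.span 𝕜 (Set.range fun i ↦ (b i : E)) = K := by
  change Submodule.span 𝕜 (Set.range (K.subtype ∘ b)) = K
  rw [Set.range_comp, Submodule.span_image, ← b.coe_toBasis, b.toBasis.span_eq,
    Submodule.map_subtype_top]

theorem Orthonormal.exists_orthonormalBasis_coe_eq {φ : ι → E} (hφ : Orthonormal 𝕜 φ)
    (hspan : Submodule.span 𝕜 (Set.range φ) = K) :
    ∃ b : OrthonormalBasis ι 𝕜 K, ∀ i, (b i : E) = φ i := by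
  have hmem (i : ι) : φ i ∈ K := hspan ▸ Submodule.subset_span (Set.mem_range_self i)
  let ψ (i : ι) : K := ⟨φ i, hmem i⟩
  have hψ : Orthonormal 𝕜 ψ := by
    simpa only [Orthonormal, Submodule.coe_norm, Submodule.coe_inner] using hφ
  have hψspan : Submodule.span 𝕜 (Set.range ψ) = ⊤ := by
    apply Submodule.map_injective_of_injective K.injective_subtype
    rw [Submodule.map_span, Submodule.map_subtype_top, ← Set.range_comp]
    exact hspan
  exact ⟨OrthonormalBasis.mk hψ hψspan.ge, fun i ↦ by rw [OrthonormalBasis.coe_mk]⟩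

end

section
variable {E : Type*} [NormedAddCommGroup E] [InnerProductSpace ℝ E] {ι : Type*} [Fintype ι]

theorem Submodule.norm_sq_orthogonalProjectionOnto_eq_sum {K : Submodule ℝ E}
    [K.HasOrthogonalProjection] {φ : ι → E} (hφ : Orthonormal ℝ φ)
    (hspan : Submodule.span ℝ (Set.range φ) = K) (x : E) :
    ‖K.orthogonalProjectionOnto x‖ ^ 2 = ∑ i, ⟪x, φ i⟫ ^ 2 := by
  obtain ⟨b, hb⟩ := hφ.exists_orthonormalBasis_coe_eq hspan
  simp only [← b.sum_sq_inner_left, inner_orthogonalProjectionOnto_eq_of_mem_right, hb]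

theorem abs_inner_eq_of_inner_sub_eq_zero_or_inner_add_eq_zero {u v e : E}
    (h : ⟪u - v, e⟫ = 0 ∨ ⟪u + v, e⟫ = 0) : |⟪u, e⟫| = |⟪v, e⟫| := by
  rw [inner_sub_left, inner_add_left] at h
  refine abs_eq_abs.mpr (h.imp (fun h ↦ ?_) fun h ↦ ?_) <;> linarith

theorem exists_orthonormalBasis_abs_inner_eq [FiniteDimensional ℝ E]
    (hι : Module.finrank ℝ E = Fintype.card ι) {u v : E} (h : ‖u‖ = ‖v‖) :
    ∃ b : OrthonormalBasis ι ℝ E, ∀ i, |⟪u, b i⟫| = |⟪v, b i⟫| := by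
  rcases eq_or_ne u v with rfl | huv
  · exact ⟨(stdOrthonormalBasis ℝ E).reindex (Fintype.equivOfCardEq (by simp [hι])),
      fun _ ↦ rfl⟩
  have hw : u - v ≠ 0 := sub_ne_zero.mpr huv
  obtain ⟨i₀⟩ : Nonempty ι := by
    have : Nontrivial E := ⟨⟨_, 0, hw⟩⟩
    exact Fintype.card_pos_iff.mp (hι ▸ Module.finrank_pos)
  set w := ‖u - v‖⁻¹ • (u - v)
  have hon : Orthonormal ℝ (({i₀} : Set ι).domRestrict fun _ ↦ w) :=
    ⟨fun _ ↦ norm_smul_inv_norm hw, fun i j hij ↦ (hij (Subsingleton.elim i j)).elim⟩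
  obtain ⟨b, hb⟩ := hon.exists_orthonormalBasis_extension_of_card_eq hι
  refine ⟨b, fun i ↦ abs_inner_eq_of_inner_sub_eq_zero_or_inner_add_eq_zero ?_⟩
  rcases eq_or_ne i i₀ with rfl | hi
  · right
    rw [hb i rfl, real_inner_smul_right, (real_inner_add_sub_eq_zero_iff u v).mpr h, mul_zero]
  · left
    have : ⟪b i₀, b i⟫ = 0 := b.orthonormal.2 hi.symm
    rw [hb i₀ rfl, real_inner_smul_left, mul_eq_zero] at this
    exact this.resolve_left (inv_ne_zero (norm_ne_zero_iff.mpr hw))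

end

/-- Subspaces {W_n} allow phase retrieval iff for every choice of orthonormal bases of the
W_n, the combined family of vectors allows phase retrieval. -/
theorem stmt_5 (M N : ℕ) (W : Fin N → Submodule ℝ (EuclideanSpace ℝ (Fin M)))
    (D : Fin N → ℕ) (hD : ∀ n, Module.finrank ℝ (W n) = D n) :
    (∀ x y : EuclideanSpace ℝ (Fin M),
        (∀ n, ‖(W n).orthogonalProjectionOnto x‖ = ‖(W n).orthogonalProjectionOnto y‖) →
        x = y ∨ x = -y) ↔
    (∀ φ : (n : Fin N) → Fin (D n) → EuclideanSpace ℝ (Fin M),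
        (∀ n, Orthonormal ℝ (φ n) ∧ Submodule.span ℝ (Set.range (φ n)) = W n) →
        ∀ x y : EuclideanSpace ℝ (Fin M),
          (∀ n d, |⟪x, φ n d⟫| = |⟪y, φ n d⟫|) → x = y ∨ x = -y) := by
  constructor
  · intro hsub φ hφ x y habs
    refine hsub x y fun n ↦ (sq_eq_sq₀ (norm_nonneg _) (norm_nonneg _)).mp ?_
    rw [Submodule.norm_sq_orthogonalProjectionOnto_eq_sum (hφ n).1 (hφ n).2,
      Submodule.norm_sq_orthogonalProjectionOnto_eq_sum (hφ n).1 (hφ n).2]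
    exact Finset.sum_congr rfl fun d _ ↦ by rw [← sq_abs, habs n d, sq_abs]
  · intro hvec x y hnorm
    choose b hb using fun n ↦
      exists_orthonormalBasis_abs_inner_eq ((hD n).trans (Fintype.card_fin _).symm) (hnorm n)
    refine hvec (fun n d ↦ b n d)
      (fun n ↦ ⟨(b n).orthonormal.comp_linearIsometry (W n).subtypeₗᵢ, (b n).span_range_coe⟩)
      x y fun n d ↦ ?_
    simpa only [Submodule.inner_orthogonalProjectionOnto_eq_of_mem_right] using hb n d
end

section
/- Let W₁,...,W_N be subspaces of ℝ^M with orthogonal projections P_n, and let F : Sym(M,ℝ) → ℝ^N be the linear map F(A)(n) = Tr(A P_n). Then {W_n} allows phase retrieval if and only if the null space of F contains no nonzero matrix of rank 1 or 2. -/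
/-!
A real symmetric matrix of rank at most two is positive semidefinite, negative semidefinite, or
of the form `x xᵀ - y yᵀ`. Since `Tr ((x xᵀ - y yᵀ) P_n) = ‖P_n x‖² - ‖P_n y‖²` and
`x xᵀ = y yᵀ ↔ x = ± y`, phase retrieval is exactly the absence of nonzero matrices of the last
kind in the null space. A nonzero semidefinite matrix `∑ v_k v_kᵀ` in the null space is excluded
as well: the terms `‖P_n v_k‖²` are nonnegative, so some nonzero `v_k` would have the same
measurements as `0`. Conversely every `x xᵀ - y yᵀ` is symmetric of rank at most two.
-/

open Matrix

namespace Matrix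

variable {m n ι R : Type*}

theorem trace_vecMulVec_mul [Fintype m] [CommSemiring R] (x y : m → R) (Q : Matrix m m R) :
    (vecMulVec x y * Q).trace = y ⬝ᵥ Q *ᵥ x := by
  rw [vecMulVec_mul, trace_vecMulVec, dotProduct_comm, dotProduct_mulVec]

theorem vecMulVec_self_eq_vecMulVec_self_iff [CommRing R] [NoZeroDivisors R] {x y : m → R} :
    vecMulVec x x = vecMulVec y y ↔ x = y ∨ x = -y := by
  refine ⟨fun h => ?_, by rintro (rfl | rfl) <;> simp [vecMulVec_neg, neg_vecMulVec]⟩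
  have hxy : ∀ i j, x i * x j = y i * y j := fun i j => congrFun₂ h i j
  by_cases hy : y = 0
  · subst hy
    exact .inl (funext fun i => by simpa using hxy i i)
  obtain ⟨j, hj⟩ := Function.ne_iff.mp hy
  rcases mul_self_eq_mul_self_iff.mp (hxy j j) with hxj | hxj
  · refine .inl (funext fun i => mul_right_cancel₀ hj ?_)
    linear_combination hxy i j - x i * hxj
  · refine .inr (funext fun i => mul_right_cancel₀ hj ?_)
    show x i * y j = -y i * y j
    linear_combination -hxy i j + x i * hxj

theorem sum_vecMulVec_eq_mul [Fintype ι] [CommSemiring R] (u : ι → m → R) (v : ι → n → R) :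
    ∑ k, vecMulVec (u k) (v k) = (of fun i k => u k i) * of v := by
  ext i j
  simp [mul_apply, sum_apply, vecMulVec_apply]

theorem rank_sum_vecMulVec_le [Fintype ι] [Fintype n] [CommSemiring R] [StrongRankCondition R]
    (u : ι → m → R) (v : ι → n → R) :
    (∑ k, vecMulVec (u k) (v k)).rank ≤ Fintype.card ι := by
  rw [sum_vecMulVec_eq_mul]
  exact (rank_mul_le_left _ _).trans (rank_le_card_width _)

theorem rank_vecMulVec_self_sub_vecMulVec_self_le [Fintype m] [CommRing R] [StrongRankCondition R]
    (x y : m → R) : (vecMulVec x x - vecMulVec y y).rank ≤ 2 := by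
  have h := rank_sum_vecMulVec_le ![x, y] ![x, -y]
  simpa [Fin.sum_univ_two, vecMulVec_neg, ← sub_eq_add_neg] using h

theorem rank_eq_zero_iff [Fintype n] [DecidableEq n] [Field R] {A : Matrix m n R} :
    A.rank = 0 ↔ A = 0 := by
  rw [rank, Submodule.finrank_eq_zero, LinearMap.range_eq_bot, ← Matrix.toLin'_apply',
    LinearEquiv.map_eq_zero_iff]

theorem IsHermitian.eq_sum_eigenvalues_smul_vecMulVec {𝕜 : Type*} [RCLike 𝕜] [Fintype n]
    [DecidableEq n] {A : Matrix n n 𝕜} (hA : A.IsHermitian) :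
    A = ∑ i, (hA.eigenvalues i : 𝕜) •
      vecMulVec ⇑(hA.eigenvectorBasis i) (star ⇑(hA.eigenvectorBasis i)) := by
  conv_lhs => rw [hA.spectral_theorem]
  ext i j
  simp only [Unitary.conjStarAlgAut_apply, mul_apply, sum_apply, smul_apply, vecMulVec_apply]
  simp [diagonal_apply, mul_left_comm, mul_assoc]

theorem smul_vecMulVec_self_of_nonneg {c : ℝ} (hc : 0 ≤ c) (x : m → ℝ) :
    c • vecMulVec x x = vecMulVec (√c • x) (√c • x) := by
  rw [smul_vecMulVec, vecMulVec_smul, smul_smul, Real.mul_self_sqrt hc]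

theorem posSemidef_sum_smul_vecMulVec_self [Fintype m] [Fintype ι] {c : ι → ℝ} (hc : ∀ i, 0 ≤ c i)
    (v : ι → m → ℝ) : (∑ i, c i • vecMulVec (v i) (v i)).PosSemidef :=
  posSemidef_sum _ fun i _ => by simpa using (posSemidef_vecMulVec_self_star (v i)).smul (hc i)

theorem IsHermitian.exists_eq_vecMulVec_sub_of_rank_le_two [Fintype n] [DecidableEq n]
    {A : Matrix n n ℝ} (hA : A.IsHermitian) (hrank : A.rank ≤ 2) {i j : n}
    (hi : 0 < hA.eigenvalues i) (hj : hA.eigenvalues j < 0) :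
    ∃ x y : n → ℝ, A = vecMulVec x x - vecMulVec y y := by
  set ev := hA.eigenvalues
  set b : n → n → ℝ := fun i => ⇑(hA.eigenvectorBasis i)
  have hij : i ≠ j := by rintro rfl; linarith
  have hsupp : ({k | ev k ≠ 0} : Finset n) = {i, j} := by
    refine (Finset.eq_of_subset_of_card_le ?_ ?_).symm
    · simp [Finset.insert_subset_iff, hi.ne', hj.ne]
    · rw [Finset.card_pair hij, ← Fintype.card_subtype, ← hA.rank_eq_card_non_zero_eigs]
      exact hrank
  have hA_pair : A = ev i • vecMulVec (b i) (b i) + ev j • vecMulVec (b j) (b j) := by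
    rw [show A = ∑ k, ev k • vecMulVec (b k) (b k) by
        simpa using hA.eq_sum_eigenvalues_smul_vecMulVec,
      ← Finset.sum_subset (Finset.subset_univ {i, j}), Finset.sum_pair hij]
    intro k _ hk
    have : ev k = 0 := by simpa [← hsupp] using hk
    simp [this]
  refine ⟨√(ev i) • b i, √(-ev j) • b j, ?_⟩
  rw [hA_pair, ← smul_vecMulVec_self_of_nonneg hi.le,
    ← smul_vecMulVec_self_of_nonneg (neg_nonneg.mpr hj.le), neg_smul, sub_neg_eq_add]

theorem IsHermitian.posSemidef_or_neg_posSemidef_or_exists_eq_vecMulVec_sub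
    [Fintype n] [DecidableEq n] {A : Matrix n n ℝ} (hA : A.IsHermitian) (hrank : A.rank ≤ 2) :
    A.PosSemidef ∨ (-A).PosSemidef ∨ ∃ x y : n → ℝ, A = vecMulVec x x - vecMulVec y y := by
  set ev := hA.eigenvalues
  have hA_eq : A = ∑ i, ev i • vecMulVec ⇑(hA.eigenvectorBasis i) ⇑(hA.eigenvectorBasis i) := by
    simpa using hA.eq_sum_eigenvalues_smul_vecMulVec
  by_cases hmix : ∃ i j, 0 < ev i ∧ ev j < 0
  · obtain ⟨i, j, hi, hj⟩ := hmix
    exact .inr (.inr (hA.exists_eq_vecMulVec_sub_of_rank_le_two hrank hi hj))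
  push Not at hmix
  by_cases hpos : ∃ i, 0 < ev i
  · obtain ⟨i, hi⟩ := hpos
    rw [hA_eq]
    exact .inl (posSemidef_sum_smul_vecMulVec_self (hmix i · hi) _)
  · push Not at hpos
    rw [hA_eq, ← Finset.sum_neg_distrib]
    simp_rw [← neg_smul]
    exact .inr (.inl (posSemidef_sum_smul_vecMulVec_self (fun i => neg_nonneg.mpr (hpos i)) _))

end Matrix

def AllowsPhaseRetrieval {m ι : Type*} [Fintype m] (P : ι → Matrix m m ℝ) : Prop :=
  ∀ x y : m → ℝ, (∀ n, x ⬝ᵥ P n *ᵥ x = y ⬝ᵥ P n *ᵥ y) → x = y ∨ x = -y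

namespace AllowsPhaseRetrieval

variable {m ι : Type*} [Fintype m] {P : ι → Matrix m m ℝ}

theorem eq_zero_of_posSemidef (h : AllowsPhaseRetrieval P) (hP : ∀ n, (P n).PosSemidef)
    {A : Matrix m m ℝ} (hA : A.PosSemidef) (htr : ∀ n, (A * P n).trace = 0) : A = 0 := by
  obtain ⟨r, v, rfl⟩ := posSemidef_iff_eq_sum_vecMulVec.mp hA
  have hv : ∀ k, v k = 0 := by
    intro k
    have hzero : ∀ n, v k ⬝ᵥ P n *ᵥ v k = 0 := by
      intro n
      have htr_n := htr n
      simp only [Finset.sum_mul, trace_sum, star_trivial, trace_vecMulVec_mul] at htr_n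
      refine (Finset.sum_eq_zero_iff_of_nonneg fun l _ => ?_).mp htr_n k (Finset.mem_univ k)
      simpa using (hP n).dotProduct_mulVec_nonneg (v l)
    simpa using h (v k) 0 (by simpa using hzero)
  simp [hv]

theorem vecMulVec_self_sub_eq_zero (h : AllowsPhaseRetrieval P) {x y : m → ℝ}
    (htr : ∀ n, ((vecMulVec x x - vecMulVec y y) * P n).trace = 0) :
    vecMulVec x x - vecMulVec y y = 0 := by
  rw [sub_eq_zero, vecMulVec_self_eq_vecMulVec_self_iff]
  refine h x y fun n => ?_
  simpa [sub_mul, trace_sub, trace_vecMulVec_mul, sub_eq_zero] using htr n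

theorem eq_zero_of_rank_le_two [DecidableEq m] (h : AllowsPhaseRetrieval P)
    (hP : ∀ n, (P n).PosSemidef) {A : Matrix m m ℝ} (hA : Aᵀ = A) (hrank : A.rank ≤ 2)
    (htr : ∀ n, (A * P n).trace = 0) : A = 0 := by
  have hA' : A.IsHermitian := by rwa [IsHermitian, conjTranspose_eq_transpose_of_trivial]
  rcases hA'.posSemidef_or_neg_posSemidef_or_exists_eq_vecMulVec_sub hrank with
    hpsd | hpsd | ⟨x, y, rfl⟩
  · exact h.eq_zero_of_posSemidef hP hpsd htr
  · exact neg_eq_zero.mp (h.eq_zero_of_posSemidef hP hpsd fun n => by simp [htr n])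
  · exact h.vecMulVec_self_sub_eq_zero htr

theorem of_forall_rank_le_two
    (hnull : ∀ A : Matrix m m ℝ, Aᵀ = A → A.rank ≤ 2 → (∀ n, (A * P n).trace = 0) → A = 0) :
    AllowsPhaseRetrieval P := by
  intro x y hxy
  rw [← vecMulVec_self_eq_vecMulVec_self_iff, ← sub_eq_zero]
  refine hnull _ ?_ (rank_vecMulVec_self_sub_vecMulVec_self_le x y) fun n => ?_
  · simp [transpose_sub, transpose_vecMulVec]
  · rw [sub_mul, trace_sub, trace_vecMulVec_mul, trace_vecMulVec_mul, hxy n, sub_self]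

end AllowsPhaseRetrieval

theorem allowsPhaseRetrieval_iff {m ι : Type*} [Fintype m] [DecidableEq m]
    {P : ι → Matrix m m ℝ} (hP : ∀ n, (P n).PosSemidef) :
    AllowsPhaseRetrieval P ↔
      ∀ A : Matrix m m ℝ, Aᵀ = A → A.rank ≤ 2 → (∀ n, (A * P n).trace = 0) → A = 0 :=
  ⟨fun h _ hA hrank htr => h.eq_zero_of_rank_le_two hP hA hrank htr,
    AllowsPhaseRetrieval.of_forall_rank_le_two⟩

/-- With F(A)(n) = Tr(A P_n) on symmetric matrices, the projections {P_n} allow phase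
retrieval iff the null space of F contains no nonzero matrix of rank 1 or 2. -/
theorem stmt_8 (M N : ℕ) (P : Fin N → Matrix (Fin M) (Fin M) ℝ)
    (hsymm : ∀ n, (P n)ᵀ = P n) (hidem : ∀ n, P n * P n = P n) :
    (∀ x y : Fin M → ℝ,
        (∀ n, x ⬝ᵥ (P n).mulVec x = y ⬝ᵥ (P n).mulVec y) → x = y ∨ x = -y) ↔
    ¬ ∃ A : Matrix (Fin M) (Fin M) ℝ, Aᵀ = A ∧ (∀ n, (A * P n).trace = 0) ∧
        (A.rank = 1 ∨ A.rank = 2) := by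
  have hP : ∀ n, (P n).PosSemidef := fun n => by
    simpa [conjTranspose_eq_transpose_of_trivial, hsymm, hidem] using
      posSemidef_conjTranspose_mul_self (P n)
  rw [← AllowsPhaseRetrieval, allowsPhaseRetrieval_iff hP]
  refine ⟨fun h ⟨A, hA, htr, hrank⟩ => ?_, fun h A hA hrank htr => ?_⟩
  · have hrank0 := Matrix.rank_eq_zero_iff.mpr (h A hA (by omega) htr)
    omega
  · by_contra hA0
    have hrank0 := Matrix.rank_eq_zero_iff.not.mpr hA0
    exact h ⟨A, hA, htr, by omega⟩
end
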